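/- arXiv:1202.5720 — 7 statements merged into one kernel-verified Lean document; each statement's English description precedes it below -/
import Mathlib

section
/- If there is a graph homomorphism from G to H and H is a cover graph, then G is a cover graph. -/
open SimpleGraph

/-- A graph is a *cover graph* if it is the underlying graph of the Hasse diagram of a
partially ordered set, i.e. adjacency coincides with the (symmetrized) covering relation. -/
def SimpleGraph.IsCoverGraph {V : Type*} (G : SimpleGraph V) : Prop :=
  ∃ p : PartialOrder V, ∀ a b : V,
    G.Adj a b ↔ (@CovBy V p.toPreorder.toLT a b ∨ @CovBy V p.toPreorder.toLT b a)

/-- The direct (tensor/categorical) product of two simple graphs. -/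
def SimpleGraph.tensorProd {α β : Type*} (G : SimpleGraph α) (H : SimpleGraph β) :
    SimpleGraph (α × β) where
  Adj x y := G.Adj x.1 y.1 ∧ H.Adj x.2 y.2
  symm := ⟨fun _ _ h => ⟨h.1.symm, h.2.symm⟩⟩
  loopless := ⟨fun _ h => G.loopless.irrefl _ h.1⟩

/-- The generalized Mycielskian `M_m(G)`: levels `0,…,m` (each a copy of `V`), the edges of `G`
on level `0`, edges between consecutive levels induced by the edges of `G`, and a root `none`
adjacent to all of level `m`. -/
def SimpleGraph.Myc {V : Type*} (m : ℕ) (G : SimpleGraph V) :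
    SimpleGraph (Option (Fin (m + 1) × V)) where
  Adj x y :=
    match x, y with
    | some (i, j), some (k, l) =>
        G.Adj j l ∧ ((i.val = 0 ∧ k.val = 0) ∨ i.val + 1 = k.val ∨ k.val + 1 = i.val)
    | some (i, _), none => i.val = m
    | none, some (k, _) => k.val = m
    | none, none => False
  symm := by
    constructor
    rintro (_ | ⟨i, j⟩) (_ | ⟨k, l⟩) h
    · exact h
    · exact h
    · exact h
    · exact ⟨h.1.symm, by omega⟩
  loopless := by
    constructor
    rintro (_ | ⟨i, j⟩) h
    · exact h
    · exact G.loopless.irrefl j h.1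

open Relation

/-!
Pull the Hasse diagram of `H` back along `f`: call `a → b` an arc of `G` when `ab` is an edge
and `f a ⋖ f b`, and order `α` by the transitive closure of these arcs. Since `f` is strictly
monotone along arcs this is a strict order, and its covering pairs are exactly the arcs: an arc
cannot be refined because its image is a covering pair, and a longer chain of arcs has an
intermediate point. Every edge of `G` maps to an edge of `H`, i.e. a covering pair in one
direction, so it is an arc in one direction.
-/

section

variable {α β : Type*} {r : α → α → Prop} {a b : α}

theorem Relation.TransGen.lt_of_map_lt [Preorder β] {f : α → β}
    (hf : ∀ a b, r a b → f a < f b) (h : TransGen r a b) : f a < f b := by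
  induction h with
  | single hab => exact hf _ _ hab
  | tail _ hcb ih => exact ih.trans (hf _ _ hcb)

theorem Relation.isStrictOrder_transGen_of_map_lt [Preorder β] {f : α → β}
    (hf : ∀ a b, r a b → f a < f b) : IsStrictOrder α (TransGen r) where
  irrefl _ h := lt_irrefl _ (h.lt_of_map_lt hf)

theorem CovBy.rel_of_lt_iff_transGen [Preorder α] (hlt : ∀ a b, a < b ↔ TransGen r a b)
    (hab : a ⋖ b) : r a b := by
  obtain ⟨c, hac, hcb⟩ := TransGen.tail'_iff.1 ((hlt a b).1 hab.lt)
  rcases ReflTransGen.cases_tail hac with rfl | ⟨d, had, hdc⟩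
  · exact hcb
  · exact absurd ((hlt c b).2 (.single hcb)) (hab.2 ((hlt a c).2 (TransGen.tail' had hdc)))

theorem CovBy.of_strictMono [Preorder α] [Preorder β] {f : α → β} (hf : StrictMono f)
    (hab : a < b) (h : f a ⋖ f b) : a ⋖ b :=
  ⟨hab, fun _ hac hcb => h.2 (hf hac) (hf hcb)⟩

end

theorem isCoverGraph_of_hom_general {α β : Type*}
    (G : SimpleGraph α) (H : SimpleGraph β) (f : G →g H) (hH : H.IsCoverGraph) :
    G.IsCoverGraph := by
  obtain ⟨p, hp⟩ := hH
  let : PartialOrder β := p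
  let arc : α → α → Prop := fun a b => G.Adj a b ∧ f a ⋖ f b
  have hf : ∀ a b, arc a b → f a < f b := fun _ _ h => h.2.lt
  have : IsStrictOrder α (TransGen arc) := isStrictOrder_transGen_of_map_lt hf
  let : PartialOrder α := partialOrderOfSO (TransGen arc)
  have hmono : StrictMono f := fun _ _ h => h.lt_of_map_lt hf
  have hcov : ∀ a b : α, a ⋖ b ↔ arc a b := fun _ _ =>
    ⟨(·.rel_of_lt_iff_transGen fun _ _ => Iff.rfl), fun h => h.2.of_strictMono hmono (.single h)⟩
  refine ⟨this, fun a b => ?_⟩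
  rw [hcov, hcov]
  exact ⟨fun hab => ((hp _ _).1 (f.map_adj hab)).imp (⟨hab, ·⟩) (⟨hab.symm, ·⟩),
    fun h => h.elim (·.1) (·.1.symm)⟩

/-- If there is a graph homomorphism from `G` to `H` and `H` is a cover graph,
then `G` is a cover graph. -/
theorem isCoverGraph_of_hom {α β : Type*} [Fintype α] [Fintype β]
    (G : SimpleGraph α) (H : SimpleGraph β) (f : G →g H) (hH : H.IsCoverGraph) :
    G.IsCoverGraph :=
  isCoverGraph_of_hom_general G H f hH
end

section
/- For n ≥ 3 and m ≥ 1, the generalized Mycielskian M_m(C_n) of the n-cycle is a cover graph if and only if n is even. -/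
open SimpleGraph

/-!
In a Hasse diagram, give a traversed edge the sign `+1` if it goes up and `-1` if it goes down.
Two paths of length two with the same ends have the same total sign. Put a closed walk of odd
length `n` of `G` on level `0` of `M_m(G)` and consider, for consecutive levels, the total sign of
the zig-zag walks between them. Comparing paths of length two shows that the zig-zag between
levels `0` and `1` has twice the sign of the odd walk, that all zig-zags have the same sign, and,
through the root, that the top one has sign `0`. Hence the odd walk has sign `0`, which is
impossible for a sum of `n` terms `±1`.

Conversely, if `G` is bipartite, orient its edges on every level from one colour class to the
other, and the edges at the root towards the root. Directed paths have length at most two, and one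
parallel to an arc would join a vertex of level `m` to the root through another vertex of level
`m`; for `m ≥ 1` no two vertices of level `m` are adjacent.
-/

open Relation

namespace SimpleGraph

variable {α : Type*}

def IsHasseDiagram [PartialOrder α] (G : SimpleGraph α) : Prop :=
  ∀ a b, G.Adj a b ↔ a ⋖ b ∨ b ⋖ a

section CoverSign

variable [PartialOrder α]

open Classical in
noncomputable def coverSign (x y : α) : ℤ := if x ⋖ y then 1 else -1

lemma coverSign_of_covBy {x y : α} (h : x ⋖ y) : coverSign x y = 1 := if_pos h

lemma coverSign_of_covBy' {x y : α} (h : y ⋖ x) : coverSign x y = -1 :=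
  if_neg fun h' => h'.lt.not_gt h.lt

lemma odd_coverSign (x y : α) : Odd (coverSign x y) := by
  unfold coverSign
  split_ifs <;> decide

variable {G : SimpleGraph α}

lemma IsHasseDiagram.coverSign_swap (hG : G.IsHasseDiagram) {x y : α} (h : G.Adj x y) :
    coverSign y x = -coverSign x y := by
  rcases (hG x y).1 h with h | h
  · rw [coverSign_of_covBy h, coverSign_of_covBy' h]
  · rw [coverSign_of_covBy h, coverSign_of_covBy' h, neg_neg]

/-- If one of the two paths is a chain `x ⋖ y ⋖ z`, so is the other: otherwise the order would
have a cycle or one of its coverings would be bypassed by a longer chain. -/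
lemma IsHasseDiagram.coverSign_add_coverSign_eq (hG : G.IsHasseDiagram) {x y z w : α}
    (hxy : G.Adj x y) (hyz : G.Adj y z) (hxw : G.Adj x w) (hwz : G.Adj w z) :
    coverSign x y + coverSign y z = coverSign x w + coverSign w z := by
  rcases (hG _ _).1 hxy with h1 | h1 <;> rcases (hG _ _).1 hyz with h2 | h2 <;>
    rcases (hG _ _).1 hxw with h3 | h3 <;> rcases (hG _ _).1 hwz with h4 | h4 <;>
    grind [CovBy, coverSign_of_covBy, coverSign_of_covBy']

end CoverSign

/-- `hbypass` says that the orientation `R` has no dependent arcs. -/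
theorem isCoverGraph_of_orientation {G : SimpleGraph α} (R : α → α → Prop)
    (hR : ∀ a b, G.Adj a b ↔ R a b ∨ R b a) (hacyclic : ∀ a, ¬ TransGen R a a)
    (hbypass : ∀ a b c, R a b → TransGen R a c → ¬ TransGen R c b) : G.IsCoverGraph := by
  let _ : IsStrictOrder α (TransGen R) :=
    { irrefl := hacyclic, trans := fun _ _ _ => TransGen.trans }
  let _ := partialOrderOfSO (TransGen R)
  have hcov : ∀ a b : α, a ⋖ b ↔ R a b := by
    refine fun a b => ⟨fun ⟨hab, hmin⟩ => ?_, fun h => ⟨.single h, (hbypass a b · h)⟩⟩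
    obtain ⟨c, hac, hcb⟩ := TransGen.head'_iff.1 hab
    rcases reflTransGen_iff_eq_or_transGen.1 hcb with rfl | hcb
    · exact hac
    · exact (hmin (.single hac) hcb).elim
  exact ⟨_, fun a b => by rw [hR, hcov, hcov]⟩

section Rank

variable {R : α → α → Prop} {ρ : α → ℕ}

lemma rank_lt_of_transGen (hρ : ∀ a b, R a b → ρ a < ρ b) {a b : α} (h : TransGen R a b) :
    ρ a < ρ b := by
  induction h with
  | single h => exact hρ _ _ h
  | tail _ h ih => exact ih.trans (hρ _ _ h)

lemma rel_of_transGen_of_rank_le (hρ : ∀ a b, R a b → ρ a < ρ b) {a b : α}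
    (h : TransGen R a b) (hab : ρ b ≤ ρ a + 1) : R a b := by
  obtain ⟨c, hac, hcb⟩ := TransGen.head'_iff.1 h
  rcases reflTransGen_iff_eq_or_transGen.1 hcb with rfl | hcb
  · exact hac
  · have := hρ _ _ hac
    have := rank_lt_of_transGen hρ hcb
    omega

end Rank

variable {V : Type*} {G : SimpleGraph V} {m : ℕ}

lemma myc_adj_zero {v w : V} (h : G.Adj v w) : (Myc m G).Adj (some (0, v)) (some (0, w)) :=
  ⟨h, .inl ⟨rfl, rfl⟩⟩

lemma myc_adj_of_val_succ {i k : Fin (m + 1)} (hik : i.val + 1 = k.val) {v w : V}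
    (h : G.Adj v w) : (Myc m G).Adj (some (i, v)) (some (k, w)) :=
  ⟨h, .inr (.inl hik)⟩

lemma myc_adj_last (v : V) : (Myc m G).Adj (some (Fin.last m, v)) none :=
  Fin.val_last m

section OddClosedWalk

variable {n : ℕ} [NeZero n]

lemma sum_comp_add_one {M : Type*} [AddCommMonoid M] (F : Fin n → M) :
    ∑ j, F (j + 1) = ∑ j, F j :=
  Equiv.sum_comp (Equiv.addRight 1) F

lemma sum_add_eq_sum_add_of_shift {M : Type*} [AddCommMonoid M] {F F' H H' : Fin n → M}
    (h : ∀ j, F j + F' (j + 1) = H j + H' (j + 1)) :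
    ∑ j, (F j + F' j) = ∑ j, (H j + H' j) := by
  have := Finset.sum_congr rfl fun j (_ : j ∈ Finset.univ) => h j
  rwa [Finset.sum_add_distrib, Finset.sum_add_distrib, sum_comp_add_one F',
    sum_comp_add_one H', ← Finset.sum_add_distrib, ← Finset.sum_add_distrib] at this

variable [PartialOrder (Option (Fin (m + 1) × V))] (f : Fin n → V)

noncomputable def zigzagSign (i k : Fin (m + 1)) : ℤ :=
  ∑ j, (coverSign (some (i, f j)) (some (k, f (j + 1))) +
    coverSign (some (k, f j)) (some (i, f (j + 1))))

lemma zigzagSign_comm (i k : Fin (m + 1)) : zigzagSign f i k = zigzagSign f k i :=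
  Finset.sum_congr rfl fun _ _ => add_comm _ _

variable {f}

lemma IsHasseDiagram.zigzagSign_zero (hH : (Myc m G).IsHasseDiagram)
    (hf : ∀ j, G.Adj (f j) (f (j + 1))) {k : Fin (m + 1)} (hk : k.val = 1) :
    zigzagSign f 0 k =
      2 * ∑ j, coverSign (some ((0 : Fin (m + 1)), f j)) (some (0, f (j + 1))) := by
  have h0k : (0 : Fin (m + 1)).val + 1 = k.val := by simp [hk]
  rw [two_mul, ← Finset.sum_add_distrib]
  refine (sum_add_eq_sum_add_of_shift fun j => ?_).symm
  exact hH.coverSign_add_coverSign_eq (myc_adj_zero (hf j)) (myc_adj_zero (hf (j + 1)))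
    (myc_adj_of_val_succ h0k (hf j)) (myc_adj_of_val_succ h0k (hf (j + 1)).symm).symm

lemma IsHasseDiagram.zigzagSign_eq (hH : (Myc m G).IsHasseDiagram)
    (hf : ∀ j, G.Adj (f j) (f (j + 1))) {i k l : Fin (m + 1)} (hik : i.val + 1 = k.val)
    (hkl : k.val + 1 = l.val) : zigzagSign f k i = zigzagSign f k l :=
  sum_add_eq_sum_add_of_shift fun j =>
    hH.coverSign_add_coverSign_eq (myc_adj_of_val_succ hik (hf j).symm).symm
      (myc_adj_of_val_succ hik (hf (j + 1))) (myc_adj_of_val_succ hkl (hf j))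
      (myc_adj_of_val_succ hkl (hf (j + 1)).symm).symm

lemma IsHasseDiagram.zigzagSign_last (hH : (Myc m G).IsHasseDiagram)
    (hf : ∀ j, G.Adj (f j) (f (j + 1))) {i : Fin (m + 1)} (hi : i.val + 1 = m) :
    zigzagSign f (Fin.last m) i = 0 := by
  have hil : i.val + 1 = (Fin.last m).val := hi
  let top (j : Fin n) : Option (Fin (m + 1) × V) := some (Fin.last m, f j)
  calc zigzagSign f (Fin.last m) i
      = ∑ j, (coverSign (top j) none + coverSign none (top (j + 1))) :=
        sum_add_eq_sum_add_of_shift fun j =>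
          hH.coverSign_add_coverSign_eq (myc_adj_of_val_succ hil (hf j).symm).symm
            (myc_adj_of_val_succ hil (hf (j + 1))) (myc_adj_last _) (myc_adj_last _).symm
    _ = ∑ j, (coverSign (top j) none + coverSign none (top j)) := by
        rw [Finset.sum_add_distrib, Finset.sum_add_distrib,
          sum_comp_add_one fun j => coverSign none (top j)]
    _ = 0 := Finset.sum_eq_zero fun j _ => by
        rw [hH.coverSign_swap (myc_adj_last (f j)), add_neg_cancel]

lemma IsHasseDiagram.sum_coverSign_eq_zero (hH : (Myc m G).IsHasseDiagram)
    (hf : ∀ j, G.Adj (f j) (f (j + 1))) (hm : 1 ≤ m) :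
    ∑ j, coverSign (some ((0 : Fin (m + 1)), f j)) (some (0, f (j + 1))) = 0 := by
  obtain ⟨m, rfl⟩ : ∃ m', m = m' + 1 := ⟨m - 1, by omega⟩
  have hzig : ∀ a : Fin (m + 1), zigzagSign f a.castSucc a.succ =
      2 * ∑ j, coverSign (some ((0 : Fin (m + 2)), f j)) (some (0, f (j + 1))) := by
    refine Fin.induction (hH.zigzagSign_zero hf (by simp)) fun a ih => ?_
    rw [← Fin.succ_castSucc, ← hH.zigzagSign_eq hf (i := a.castSucc.castSucc) (by simp)
      (by simp), ← zigzagSign_comm, ih]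
  have := hzig (Fin.last m)
  rw [Fin.succ_last, zigzagSign_comm, hH.zigzagSign_last hf (by simp)] at this
  omega

end OddClosedWalk

lemma odd_sum_of_odd {ι : Type*} [Fintype ι] {F : ι → ℤ} (hF : ∀ i, Odd (F i))
    (hι : Odd (Fintype.card ι)) : Odd (∑ i, F i) := by
  rw [← ZMod.intCast_eq_one_iff_odd, Int.cast_sum]
  simp only [fun i => ZMod.intCast_eq_one_iff_odd.2 (hF i), Finset.sum_const, Finset.card_univ,
    nsmul_eq_mul, mul_one]
  exact ZMod.natCast_eq_one_iff_odd.2 hι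

theorem not_isCoverGraph_myc_of_odd {n : ℕ} [NeZero n] (hn : Odd n) {f : Fin n → V}
    (hf : ∀ j, G.Adj (f j) (f (j + 1))) (hm : 1 ≤ m) : ¬ (Myc m G).IsCoverGraph := by
  rintro ⟨_, hH : (Myc m G).IsHasseDiagram⟩
  have hodd := odd_sum_of_odd (fun j => odd_coverSign (some ((0 : Fin (m + 1)), f j))
    (some (0, f (j + 1)))) (by rwa [Fintype.card_fin])
  rw [hH.sum_coverSign_eq_zero hf hm] at hodd
  exact Int.not_odd_zero hodd

section Bipartite

variable (c : G.Coloring (Fin 2))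

def mycOrientation : Option (Fin (m + 1) × V) → Option (Fin (m + 1) × V) → Prop
  | some x, some y => (Myc m G).Adj (some x) (some y) ∧ c x.2 = 0
  | some x, none => x.1 = Fin.last m
  | none, _ => False

def mycRank : Option (Fin (m + 1) × V) → ℕ
  | some x => c x.2
  | none => 2

lemma myc_adj_iff_mycOrientation (a b : Option (Fin (m + 1) × V)) :
    (Myc m G).Adj a b ↔ mycOrientation c a b ∨ mycOrientation c b a := by
  rcases a with _ | x <;> rcases b with _ | y
  · exact ⟨False.elim, fun h => h.elim False.elim False.elim⟩
  · exact ⟨fun h => .inr (Fin.ext h), fun h => h.elim False.elim fun h => congrArg Fin.val h⟩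
  · exact ⟨fun h => .inl (Fin.ext h), fun h => h.elim (fun h => congrArg Fin.val h) False.elim⟩
  · refine ⟨fun h => ?_, fun h => h.elim And.left fun h => h.1.symm⟩
    obtain h0 | h0 : c x.2 = 0 ∨ c y.2 = 0 := by have := c.valid h.1; omega
    · exact .inl ⟨h, h0⟩
    · exact .inr ⟨h.symm, h0⟩

lemma mycRank_lt_of_mycOrientation {a b : Option (Fin (m + 1) × V)}
    (h : mycOrientation c a b) : mycRank c a < mycRank c b := by
  rcases a with _ | x <;> rcases b with _ | y
  · exact h.elim
  · exact h.elim
  · exact (c x.2).isLt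
  · have := c.valid h.1.1
    have := h.2
    simp only [mycRank]
    omega

lemma mycRank_le_two (a : Option (Fin (m + 1) × V)) : mycRank c a ≤ 2 := by
  rcases a with _ | x
  · exact le_rfl
  · exact (c x.2).isLt.le

lemma not_mycOrientation_of_two_step (hm : 1 ≤ m) {a b d : Option (Fin (m + 1) × V)}
    (had : mycOrientation c a d) (hdb : mycOrientation c d b) : ¬ mycOrientation c a b := by
  rcases a with _ | ⟨i, v⟩
  · exact had.elim
  rcases d with _ | ⟨k, w⟩
  · exact hdb.elim
  rcases b with _ | _
  · intro hi
    have hk : k = Fin.last m := hdb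
    have := had.1.2
    simp only [show i = Fin.last m from hi, hk, Fin.val_last] at this
    omega
  · exact fun _ => c.valid had.1.1 (had.2.trans hdb.2.symm)

theorem isCoverGraph_myc_of_isBipartite (hG : G.IsBipartite) (hm : 1 ≤ m) :
    (Myc m G).IsCoverGraph := by
  obtain ⟨c⟩ := hG
  have hrank : ∀ a b : Option (Fin (m + 1) × V),
      mycOrientation c a b → mycRank c a < mycRank c b :=
    fun _ _ => mycRank_lt_of_mycOrientation c
  refine isCoverGraph_of_orientation (mycOrientation c) (myc_adj_iff_mycOrientation c)
    (fun a h => (rank_lt_of_transGen hrank h).false) fun a b d hab had hdb => ?_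
  have had' := rank_lt_of_transGen hrank had
  have hdb' := rank_lt_of_transGen hrank hdb
  -- ranks lie in `{0, 1, 2}`, so both halves of a bypass `a → d → b` are arcs
  have hb := mycRank_le_two c b
  exact not_mycOrientation_of_two_step c hm (rel_of_transGen_of_rank_le hrank had (by omega))
    (rel_of_transGen_of_rank_le hrank hdb (by omega)) hab

end Bipartite

end SimpleGraph

/-- For `n ≥ 3` and `m ≥ 1`, the generalized Mycielskian `M_m(C_n)` of the `n`-cycle is a
cover graph if and only if `n` is even. -/
theorem myc_cycleGraph_isCoverGraph_iff_even (n m : ℕ) (hn : 3 ≤ n) (hm : 1 ≤ m) :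
    (SimpleGraph.Myc m (cycleGraph n)).IsCoverGraph ↔ Even n := by
  refine ⟨fun hcov => ?_, fun he =>
    isCoverGraph_myc_of_isBipartite (cycleGraph.bicoloring_of_even n he).colorable hm⟩
  have : NeZero n := ⟨by omega⟩
  have hadj (j : Fin n) : (cycleGraph n).Adj j (j + 1) := by
    rw [cycleGraph_adj', add_sub_cancel_left]
    simp [Nat.mod_eq_of_lt (by omega : 1 < n)]
  by_contra hodd
  exact not_isCoverGraph_myc_of_odd (Nat.not_even_iff_odd.1 hodd) (f := id) hadj hm hcov
end

section
/- For any graph G and m ≥ 1, the generalized Mycielskian M_m(G) is a cover graph if and only if G is bipartite. -/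
open SimpleGraph

open Relation

/-! If `G` is bipartite, give the root of `M_m(G)` a third colour. Since `1 ≤ m` the graph is
triangle-free, and orienting every edge towards the larger colour yields a poset whose Hasse
diagram is `M_m(G)`.

Conversely, let `M_m(G)` be the Hasse diagram of a poset and let `w` be a closed walk in `G` of
length `N`, indexed by `ZMod N`. For sequences `x`, `y` of vertices with every `x s` adjacent to
`y (s - 1)` and `y (s + 1)`, count modulo `2` the edges `x s — y (s ± 1)` going up from `x`.
Two vertices of a Hasse diagram with the same two neighbours lie below the same number of them
modulo `2`, so the count does not change when `x` is replaced by another such sequence. Running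
through the copies of `w` in the levels `0, 1, …, m` and then the root, the count for level `0`
against itself is `N`, and it is `0` against the constant root; hence `N` is even. -/

section CovByBit

variable {P : Type*} [PartialOrder P] {a b c d : P}

open scoped Classical in
noncomputable def covByBit (a b : P) : ZMod 2 := if a ⋖ b then 1 else 0

lemma covByBit_of_covBy (h : a ⋖ b) : covByBit a b = 1 := if_pos h

lemma covByBit_of_covBy_swap (h : b ⋖ a) : covByBit a b = 0 :=
  if_neg fun h' => h.lt.asymm h'.lt

lemma covByBit_swap (h : (hasse P).Adj a b) : covByBit b a = covByBit a b + 1 := by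
  rcases h with h | h <;> rw [covByBit_of_covBy h, covByBit_of_covBy_swap h] <;> decide

/-- Every other orientation of the four edges contains three covers forming a chain that the
fourth one skips. -/
lemma covByBit_add_covByBit_eq (hba : (hasse P).Adj b a) (hbc : (hasse P).Adj b c)
    (hda : (hasse P).Adj d a) (hdc : (hasse P).Adj d c) :
    covByBit b a + covByBit b c = covByBit d a + covByBit d c := by
  have chain {x y z t : P} (hxy : x ⋖ y) (hyz : y ⋖ z) (hzt : z ⋖ t) (hxt : x ⋖ t) : False :=
    not_covBy_of_lt_of_lt hxy.lt (hyz.lt.trans hzt.lt) hxt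
  rcases hba with h1 | h1 <;> rcases hbc with h2 | h2 <;> rcases hda with h3 | h3 <;>
    rcases hdc with h4 | h4 <;>
    simp only [covByBit_of_covBy, covByBit_of_covBy_swap, *] <;>
    first | decide | exfalso; solve_by_elim

end CovByBit

section Zigzag

variable {W P : Type*} {N : ℕ}

def SimpleGraph.IsZigzag (H : SimpleGraph W) (x y : ZMod N → W) : Prop :=
  ∀ s, H.Adj (x s) (y (s - 1)) ∧ H.Adj (x s) (y (s + 1))

lemma SimpleGraph.IsZigzag.symm {H : SimpleGraph W} {x y : ZMod N → W} (h : H.IsZigzag x y) :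
    H.IsZigzag y x := fun s =>
  ⟨by simpa using ((h (s - 1)).2).symm, by simpa using ((h (s + 1)).1).symm⟩

variable [NeZero N]

lemma ZMod.sum_add_one {M : Type*} [AddCommMonoid M] (f : ZMod N → M) :
    ∑ s, f (s + 1) = ∑ s, f s :=
  Equiv.sum_comp (Equiv.addRight 1) f

lemma ZMod.sum_sub_one {M : Type*} [AddCommMonoid M] (f : ZMod N → M) :
    ∑ s, f (s - 1) = ∑ s, f s :=
  Equiv.sum_comp (Equiv.subRight 1) f

variable [PartialOrder P] {x y z : ZMod N → P}

noncomputable def zigzagBits (x y : ZMod N → P) : ZMod 2 :=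
  ∑ s, (covByBit (x s) (y (s - 1)) + covByBit (x s) (y (s + 1)))

lemma zigzagBits_swap_eq_sum (x y : ZMod N → P) :
    zigzagBits y x = ∑ s, (covByBit (y (s + 1)) (x s) + covByBit (y (s - 1)) (x s)) := by
  rw [zigzagBits, Finset.sum_add_distrib, Finset.sum_add_distrib,
    ← ZMod.sum_add_one fun s => covByBit (y s) (x (s - 1)),
    ← ZMod.sum_sub_one fun s => covByBit (y s) (x (s + 1))]
  simp only [add_sub_cancel_right, sub_add_cancel]

lemma zigzagBits_comm (h : (hasse P).IsZigzag x y) : zigzagBits y x = zigzagBits x y := by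
  rw [zigzagBits_swap_eq_sum, zigzagBits]
  refine Finset.sum_congr rfl fun s _ => ?_
  rw [covByBit_swap (h s).2, covByBit_swap (h s).1, add_add_add_comm, CharTwo.add_self_eq_zero,
    add_zero, add_comm]

lemma zigzagBits_eq_of_isZigzag (hx : (hasse P).IsZigzag x y) (hz : (hasse P).IsZigzag z y) :
    zigzagBits x y = zigzagBits z y :=
  Finset.sum_congr rfl fun s _ => covByBit_add_covByBit_eq (hx s).1 (hx s).2 (hz s).1 (hz s).2

lemma zigzagBits_self (h : (hasse P).IsZigzag x x) : zigzagBits x x = N := by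
  have hedge (s : ZMod N) : covByBit (x (s + 1)) (x s) + covByBit (x s) (x (s + 1)) = 1 := by
    rw [covByBit_swap (h s).2, add_right_comm, CharTwo.add_self_eq_zero, zero_add]
  rw [zigzagBits, Finset.sum_add_distrib, ← ZMod.sum_add_one fun s => covByBit (x s) (x (s - 1)),
    ← Finset.sum_add_distrib]
  simp only [add_sub_cancel_right, hedge, Finset.sum_const, Finset.card_univ, ZMod.card,
    nsmul_eq_mul, mul_one]

lemma zigzagBits_const_left (r : P) (y : ZMod N → P) : zigzagBits (fun _ => r) y = 0 := by
  rw [zigzagBits, Finset.sum_add_distrib, ZMod.sum_sub_one fun s => covByBit r (y s),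
    ZMod.sum_add_one fun s => covByBit r (y s), CharTwo.add_self_eq_zero]

theorem even_of_isZigzag_chain (c : ℕ → ZMod N → P) (n : ℕ) (r : P)
    (h0 : (hasse P).IsZigzag (c 0) (c 0)) (hc : ∀ k ≤ n, (hasse P).IsZigzag (c k) (c (k + 1)))
    (htop : c (n + 1) = fun _ => r) : Even N := by
  have key : ∀ k ≤ n, zigzagBits (c (k + 1)) (c k) = N := by
    intro k hk
    induction k with
    | zero => rw [zigzagBits_eq_of_isZigzag (hc 0 hk).symm h0, zigzagBits_self h0]
    | succ k ih =>
      rw [zigzagBits_eq_of_isZigzag (hc (k + 1) hk).symm (hc k (by omega)),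
        zigzagBits_comm (hc k (by omega)).symm, ih (by omega)]
  rw [← ZMod.natCast_eq_zero_iff_even, ← key n le_rfl, htop, zigzagBits_const_left]

end Zigzag

lemma SimpleGraph.isCoverGraph_iff_exists_eq_hasse {V : Type*} {H : SimpleGraph V} :
    H.IsCoverGraph ↔ ∃ p : PartialOrder V, H = @hasse V p.toPreorder := by
  refine exists_congr fun p => ?_
  simp only [← adj_inj, funext_iff, hasse_adj, eq_iff_iff]

section TriangleFree

variable {V α : Type*} {H : SimpleGraph V}

lemma SimpleGraph.Coloring.lt_of_transGen [Preorder α] (C : H.Coloring α) {a b : V}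
    (h : TransGen (fun x y => H.Adj x y ∧ C x < C y) a b) : C a < C b := by
  induction h with
  | single h => exact h.2
  | tail _ h ih => exact ih.trans h.2

variable [PartialOrder V] {a b : V}

lemma SimpleGraph.Coloring.adj_of_covBy [Preorder α] {C : H.Coloring α}
    (hlt : ∀ a b : V, a < b ↔ TransGen (fun x y => H.Adj x y ∧ C x < C y) a b) (h : a ⋖ b) :
    H.Adj a b := by
  obtain ⟨x, hax, hxb⟩ := TransGen.head'_iff.1 ((hlt a b).1 h.lt)
  rcases reflTransGen_iff_eq_or_transGen.1 hxb with rfl | hxb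
  · exact hax.1
  · exact absurd ((hlt x b).2 hxb) (h.2 ((hlt a x).2 (.single hax)))

lemma SimpleGraph.Coloring.covBy_of_adj {C : H.Coloring (Fin 3)}
    (hlt : ∀ a b : V, a < b ↔ TransGen (fun x y => H.Adj x y ∧ C x < C y) a b)
    (hH : H.CliqueFree 3) (hab : H.Adj a b) (h : C a < C b) : a ⋖ b := by
  have hmono : StrictMono C := fun x y hxy => C.lt_of_transGen ((hlt x y).1 hxy)
  refine ⟨(hlt a b).2 (.single ⟨hab, h⟩), fun c hac hcb => ?_⟩
  have hac' : a ⋖ c := ⟨hac, fun x hax hxc => by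
    have := hmono hax; have := hmono hxc; have := hmono hcb; omega⟩
  have hcb' : c ⋖ b := ⟨hcb, fun x hcx hxb => by
    have := hmono hac; have := hmono hcx; have := hmono hxb; omega⟩
  classical
  exact hH {a, c, b} (is3Clique_triple_iff.2 ⟨adj_of_covBy hlt hac', hab, adj_of_covBy hlt hcb'⟩)

end TriangleFree

/-- Orient every edge towards the larger colour; the covering pairs of the resulting order are
exactly the edges, because a longer increasing path would need a fourth colour or a triangle. -/
theorem SimpleGraph.isCoverGraph_of_colorable_three_of_cliqueFree_three {V : Type*}
    {H : SimpleGraph V} (hc : H.Colorable 3) (hH : H.CliqueFree 3) : H.IsCoverGraph := by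
  obtain ⟨C⟩ := hc
  let up : V → V → Prop := fun x y => H.Adj x y ∧ C x < C y
  have : IsStrictOrder V (TransGen up) :=
    { irrefl := fun _ h => lt_irrefl _ (C.lt_of_transGen h)
      trans := fun _ _ _ => TransGen.trans }
  let order : PartialOrder V := partialOrderOfSO (TransGen up)
  have hlt : ∀ a b : V, a < b ↔ TransGen up a b := fun _ _ => Iff.rfl
  refine ⟨order, fun a b => ⟨fun hab => ?_, ?_⟩⟩
  · rcases lt_or_gt_of_ne (C.valid hab) with h | h
    · exact .inl (Coloring.covBy_of_adj hlt hH hab h)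
    · exact .inr (Coloring.covBy_of_adj hlt hH hab.symm h)
  · rintro (h | h)
    exacts [Coloring.adj_of_covBy hlt h, (Coloring.adj_of_covBy hlt h).symm]

lemma SimpleGraph.Walk.adj_getVert_val_add_one {V : Type*} {G : SimpleGraph V} {u : V}
    (p : G.Walk u u) [NeZero p.length] (t : ZMod p.length) :
    G.Adj (p.getVert t.val) (p.getVert (t + 1).val) := by
  have ht := ZMod.val_lt t
  rw [ZMod.val_add, ZMod.val_one_eq_one_mod, Nat.add_mod_mod]
  rcases (show t.val + 1 < p.length ∨ t.val + 1 = p.length by omega) with h | h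
  · rw [Nat.mod_eq_of_lt h]
    exact p.adj_getVert_succ (by omega)
  · have hlast := p.adj_getVert_succ (i := t.val) (by omega)
    rw [h, p.getVert_length] at hlast
    rwa [h, Nat.mod_self, p.getVert_zero]

namespace SimpleGraph.Myc

variable {V : Type*} {G : SimpleGraph V} {m : ℕ}

@[simp]
lemma not_adj_none_none : ¬(Myc m G).Adj none none :=
  id

@[simp]
lemma adj_some_some {i k : Fin (m + 1)} {j l : V} :
    (Myc m G).Adj (some (i, j)) (some (k, l)) ↔
      G.Adj j l ∧ ((i.val = 0 ∧ k.val = 0) ∨ i.val + 1 = k.val ∨ k.val + 1 = i.val) :=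
  Iff.rfl

@[simp]
lemma adj_some_none {i : Fin (m + 1)} {j : V} : (Myc m G).Adj (some (i, j)) none ↔ i.val = m :=
  Iff.rfl

@[simp]
lemma adj_none_some {k : Fin (m + 1)} {l : V} : (Myc m G).Adj none (some (k, l)) ↔ k.val = m :=
  Iff.rfl

lemma colorable_succ {n : ℕ} (h : G.Colorable n) : (Myc m G).Colorable (n + 1) := by
  obtain ⟨C⟩ := h
  refine ⟨Coloring.mk (fun | none => Fin.last n | some (_, j) => (C j).castSucc) ?_⟩
  rintro (_ | ⟨i, j⟩) (_ | ⟨k, l⟩) hadj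
  · exact absurd hadj (Myc m G).irrefl
  · exact (Fin.castSucc_lt_last _).ne'
  · exact (Fin.castSucc_lt_last _).ne
  · exact Fin.castSucc_injective _ |>.ne (C.valid hadj.1)

lemma cliqueFree_three (hG : G.CliqueFree 3) (hm : 1 ≤ m) : (Myc m G).CliqueFree 3 := by
  classical
  intro s hs
  obtain ⟨a, b, c, hab, hac, hbc, rfl⟩ := is3Clique_iff.1 hs
  -- the neighbours of the root all lie in level `m`, which is independent as `1 ≤ m`
  rcases a with _ | ⟨i, j⟩ <;> rcases b with _ | ⟨k, l⟩ <;> rcases c with _ | ⟨r, t⟩ <;>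
    simp only [not_adj_none_none, adj_some_some, adj_some_none, adj_none_some] at hab hac hbc
  all_goals first | exact hG {j, l, t} (is3Clique_triple_iff.2 ⟨hab.1, hac.1, hbc.1⟩) | omega

variable {N : ℕ}

def levels (m : ℕ) (w : ZMod N → V) (k : ℕ) (s : ZMod N) : Option (Fin (m + 1) × V) :=
  if h : k ≤ m then some (⟨k, Nat.lt_succ_of_le h⟩, w s) else none

variable {w : ZMod N → V}

lemma isZigzag_levels_zero (hw : ∀ s, G.Adj (w s) (w (s + 1))) :
    (Myc m G).IsZigzag (levels m w 0) (levels m w 0) := fun s => by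
  have : G.Adj (w s) (w (s - 1)) := by simpa using (hw (s - 1)).symm
  simp [levels, hw, this]

lemma isZigzag_levels_succ (hw : ∀ s, G.Adj (w s) (w (s + 1))) {k : ℕ} (hk : k ≤ m) :
    (Myc m G).IsZigzag (levels m w k) (levels m w (k + 1)) := fun s => by
  have : G.Adj (w s) (w (s - 1)) := by simpa using (hw (s - 1)).symm
  rcases (show k + 1 ≤ m ∨ k = m by omega) with hk' | rfl
  · simp [levels, hk, hk', hw, this]
  · simp [levels]

lemma levels_succ_self (w : ZMod N → V) : levels m w (m + 1) = fun _ => none := by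
  funext s
  simp [levels]

lemma even_of_isCoverGraph (hM : (Myc m G).IsCoverGraph) [NeZero N]
    (hw : ∀ s, G.Adj (w s) (w (s + 1))) : Even N := by
  obtain ⟨p, hp⟩ := isCoverGraph_iff_exists_eq_hasse.1 hM
  exact even_of_isZigzag_chain (levels m w) m none (hp ▸ isZigzag_levels_zero hw)
    (fun k hk => hp ▸ isZigzag_levels_succ hw hk) (levels_succ_self w)

lemma colorable_two_of_isCoverGraph (hM : (Myc m G).IsCoverGraph) : G.Colorable 2 := by
  refine two_colorable_iff_forall_loop_even.2 fun u p => ?_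
  rcases Nat.eq_zero_or_pos p.length with h | h
  · simp [h]
  · have : NeZero p.length := ⟨h.ne'⟩
    exact even_of_isCoverGraph hM p.adj_getVert_val_add_one

end SimpleGraph.Myc

theorem myc_isCoverGraph_iff_bipartite_general {V : Type*} (G : SimpleGraph V)
    (m : ℕ) (hm : 1 ≤ m) : (SimpleGraph.Myc m G).IsCoverGraph ↔ G.Colorable 2 :=
  ⟨Myc.colorable_two_of_isCoverGraph, fun h =>
    isCoverGraph_of_colorable_three_of_cliqueFree_three (Myc.colorable_succ h)
      (Myc.cliqueFree_three (h.cliqueFree (by norm_num)) hm)⟩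

/-- For any graph `G` and `m ≥ 1`, the generalized Mycielskian `M_m(G)` is a cover graph
if and only if `G` is bipartite (i.e. `2`-colorable). -/
theorem myc_isCoverGraph_iff_bipartite {V : Type*} [Fintype V] (G : SimpleGraph V)
    (m : ℕ) (hm : 1 ≤ m) : (SimpleGraph.Myc m G).IsCoverGraph ↔ G.Colorable 2 :=
  myc_isCoverGraph_iff_bipartite_general G m hm
end

section
/- If G is bipartite with at least one edge and m ≥ 1, then the generalized Mycielskian M_m(G) has chromatic number 3 and girth at least 4. -/
open SimpleGraph

theorem Bool.eq_of_ne_of_ne {x y z : Bool} (hxy : x ≠ y) (hyz : y ≠ z) : x = z := by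
  rw [Bool.eq_not_of_ne hxy, Bool.eq_not_of_ne hyz, Bool.not_not]

namespace SimpleGraph

variable {V : Type*} {G : SimpleGraph V} {m : ℕ}

@[simp]
lemma myc_adj_some_some {i k : Fin (m + 1)} {j l : V} :
    (Myc m G).Adj (some (i, j)) (some (k, l)) ↔
      G.Adj j l ∧ ((i.val = 0 ∧ k.val = 0) ∨ i.val + 1 = k.val ∨ k.val + 1 = i.val) :=
  Iff.rfl

@[simp]
lemma myc_adj_some_none {i : Fin (m + 1)} {j : V} :
    (Myc m G).Adj (some (i, j)) none ↔ i.val = m :=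
  Iff.rfl

@[simp]
lemma myc_adj_none_some {k : Fin (m + 1)} {l : V} :
    (Myc m G).Adj none (some (k, l)) ↔ k.val = m :=
  Iff.rfl

@[simp]
lemma myc_not_adj_none_none : ¬(Myc m G).Adj none none :=
  id

theorem Colorable.myc {n : ℕ} (hG : G.Colorable n) (hm : 1 ≤ m) :
    (Myc m G).Colorable (n + 1) := by
  obtain ⟨c⟩ := hG
  refine ⟨Coloring.mk (fun
    | none => 0
    | some (i, v) => if i.val = m then Fin.last n else (c v).castSucc) ?_⟩
  rintro (_ | ⟨i, j⟩) (_ | ⟨k, l⟩) hadj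
  · exact absurd hadj myc_not_adj_none_none
  · rw [myc_adj_none_some] at hadj
    cases n with
    | zero => exact (c l).elim0
    | succ n => simp [hadj, Fin.ext_iff]
  · rw [myc_adj_some_none] at hadj
    cases n with
    | zero => exact (c j).elim0
    | succ n => simp [hadj, Fin.ext_iff]
  · obtain ⟨hjl, hlev⟩ := myc_adj_some_some.1 hadj
    by_cases hi : i.val = m <;> by_cases hk : k.val = m
    · omega
    · simpa [hi, hk] using (Fin.castSucc_ne_last (c l)).symm
    · simp [hi, hk, Fin.castSucc_ne_last]
    · simpa [hi, hk] using c.valid hjl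

/-- Along the copies of an edge `ab`, two colours cannot change from one level to the next, so
the root sees both colours at level `m`. -/
theorem myc_not_colorable_two {a b : V} (hab : G.Adj a b) : ¬(Myc m G).Colorable 2 := by
  rintro ⟨c₂⟩
  let c : (Myc m G).Coloring Bool := recolorOfEquiv _ finTwoEquiv c₂
  have hlevel : ∀ i : Fin (m + 1), c (some (i, a)) ≠ c (some (i, b)) := by
    intro i
    induction i using Fin.induction with
    | zero => exact c.valid (by simp [hab])
    | succ i ih =>
      have ha : c (some (i.succ, a)) = c (some (i.castSucc, a)) :=
        Bool.eq_of_ne_of_ne (c.valid (by simp [hab])) ih.symm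
      have hb : c (some (i.succ, b)) = c (some (i.castSucc, b)) :=
        Bool.eq_of_ne_of_ne (c.valid (by simp [hab.symm])) ih
      rwa [ha, hb]
  exact hlevel (Fin.last m) <|
    Bool.eq_of_ne_of_ne (c.valid (by simp)) (c.valid (by simp) : c none ≠ _)

/-- The neighbours of the root all lie on level `m ≥ 1`, which is independent; any other triangle
projects to a triangle of `G`. -/
theorem CliqueFree.myc (hG : G.CliqueFree 3) (hm : 1 ≤ m) : (Myc m G).CliqueFree 3 := by
  classical
  intro s hs
  obtain ⟨x, y, z, hxy, hxz, hyz, rfl⟩ := is3Clique_iff.1 hs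
  rcases x with _ | ⟨i, j⟩ <;> rcases y with _ | ⟨k, l⟩ <;> rcases z with _ | ⟨p, q⟩ <;>
    simp only [myc_adj_some_some, myc_adj_some_none, myc_adj_none_some,
      myc_not_adj_none_none] at hxy hxz hyz
  all_goals first
    | omega
    | exact hG {j, l, q} (is3Clique_triple_iff.2 ⟨hxy.1, hxz.1, hyz.1⟩)

theorem CliqueFree.four_le_egirth (hG : G.CliqueFree 3) : 4 ≤ G.egirth := by
  refine le_egirth.2 fun a w hw => ?_
  have hw3 : w.length ≠ 3 := fun h3 => by
    obtain ⟨s, hs⟩ := is3Clique_iff_exists_cycle_length_three.2 ⟨a, w, hw, h3⟩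
    exact hG s hs
  have := hw.three_le_length
  exact_mod_cast (by omega : 4 ≤ w.length)

end SimpleGraph

theorem myc_chromaticNumber_and_girth_general {V : Type*} (G : SimpleGraph V)
    (hbip : G.Colorable 2) (hedge : ∃ a b, G.Adj a b) (m : ℕ) (hm : 1 ≤ m) :
    (SimpleGraph.Myc m G).chromaticNumber = 3 ∧ 4 ≤ (SimpleGraph.Myc m G).egirth := by
  obtain ⟨a, b, hab⟩ := hedge
  exact ⟨chromaticNumber_eq_iff_colorable_not_colorable.2
      ⟨hbip.myc hm, myc_not_colorable_two hab⟩,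
    ((hbip.cliqueFree (by norm_num)).myc hm).four_le_egirth⟩

/-- If `G` is bipartite with at least one edge and `m ≥ 1`, then `M_m(G)` has chromatic
number `3` and girth at least `4`. -/
theorem myc_chromaticNumber_and_girth {V : Type*} [Fintype V] (G : SimpleGraph V)
    (hbip : G.Colorable 2) (hedge : ∃ a b, G.Adj a b) (m : ℕ) (hm : 1 ≤ m) :
    (SimpleGraph.Myc m G).chromaticNumber = 3 ∧ 4 ≤ (SimpleGraph.Myc m G).egirth :=
  myc_chromaticNumber_and_girth_general G hbip hedge m hm
end

section
/- For p ≥ m ≥ 1, there is a graph homomorphism from M_p(C_{2q+1}) to M_m(C_{2q+1}), given by mapping ⟨i,j⟩ to ⟨0,j⟩ for 0 ≤ i ≤ p−m, to ⟨i−p+m, j⟩ for p−m+1 ≤ i ≤ p, and the root u to the root u. -/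
open SimpleGraph

namespace SimpleGraph.Myc

variable {V : Type*} {p m : ℕ}

/-- Truncated subtraction collapses levels `0, …, p - m` onto level `0`. -/
def collapseLevels (G : SimpleGraph V) (hmp : m ≤ p) : Myc p G →g Myc m G where
  toFun := Option.map (Prod.map (fun i => ⟨i.val - (p - m), by omega⟩) id)
  map_rel' := by
    rintro (_ | ⟨i, j⟩) (_ | ⟨k, l⟩) h
    · exact h.elim
    · exact (show k.val - (p - m) = m by simp only [Myc] at h; omega)
    · exact (show i.val - (p - m) = m by simp only [Myc] at h; omega)
    · exact ⟨h.1, by have := h.2; dsimp at this ⊢; omega⟩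

@[simp]
theorem collapseLevels_some {G : SimpleGraph V} (hmp : m ≤ p) (i : Fin (p + 1)) (j : V) :
    collapseLevels G hmp (some (i, j)) = some (⟨i.val - (p - m), by omega⟩, j) := rfl

end SimpleGraph.Myc

/-- For `p ≥ m ≥ 1`, the map sending the root to the root, `⟨i,j⟩` to `⟨0,j⟩` for
`0 ≤ i ≤ p−m`, and `⟨i,j⟩` to `⟨i−(p−m), j⟩` for `p−m+1 ≤ i ≤ p`, is a graph homomorphism
from `M_p(C_{2q+1})` to `M_m(C_{2q+1})`. -/
theorem myc_hom_level_collapse (p m q : ℕ) (hmp : m ≤ p) :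
    ∃ f : SimpleGraph.Myc p (cycleGraph (2 * q + 1)) →g
          SimpleGraph.Myc m (cycleGraph (2 * q + 1)),
      f none = none ∧
      ∀ (i : Fin (p + 1)) (j : Fin (2 * q + 1)),
        f (some (i, j)) =
          if i.val ≤ p - m then some (⟨0, Nat.succ_pos m⟩, j)
          else some (⟨i.val - (p - m), by have := i.isLt; omega⟩, j) := by
  refine ⟨Myc.collapseLevels _ hmp, rfl, fun i j => ?_⟩
  split_ifs with hi
  · simp only [Myc.collapseLevels_some, Option.some.injEq, Prod.mk.injEq, and_true]
    ext
    exact Nat.sub_eq_zero_of_le hi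
  · rfl
end

section
/- For all positive integers m, n, s, t, the direct product M_m(C_{2s+1}) × M_n(C_{2t+1}) is not a cover graph. -/
open SimpleGraph

/-!
Write `σ x y = ltSign x y = ±1` for the direction of an edge `xy` of a Hasse diagram. Every 4-cycle
of a Hasse diagram has two edges going up and two going down. Given a homomorphism from
`M_P(C_{2q+1})` into a Hasse diagram, let `v i j` be the image of vertex `j` on level `i`, the root
counting as a constant level `P + 1`. The rung sum `∑ j, σ (v i j) (v (i+1) (j+1)) +
σ (v (i+1) j) (v i (j+1))` is then the same for all `i`, and equals the rung sum of level `0`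
against itself, which is twice the odd signed length of the cycle; but between level `P` and the
root it telescopes to `0`. For `P = max m n` and `q = s + t`, `M_P(C_{2q+1})` maps to both
factors, hence to their product.
-/

section Sign
variable {α : Type*} [PartialOrder α]

open Classical in
noncomputable def ltSign (x y : α) : ℤ := if x < y then 1 else -1

lemma ltSign_of_lt {x y : α} (h : x < y) : ltSign x y = 1 := by
  classical exact if_pos h

lemma ltSign_of_gt {x y : α} (h : y < x) : ltSign x y = -1 := by
  classical exact if_neg h.asymm

lemma ltSign_emod_two (x y : α) : ltSign x y % 2 = 1 := by
  classical unfold ltSign; split_ifs <;> rfl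

lemma sum_ltSign_ne_zero {ι : Type*} {s : Finset ι} (hs : Odd s.card) (x y : ι → α) :
    ∑ i ∈ s, ltSign (x i) (y i) ≠ 0 := by
  intro h
  have := Finset.sum_int_mod s 2 fun i => ltSign (x i) (y i)
  simp only [h, ltSign_emod_two, Finset.sum_const, nsmul_one] at this
  obtain ⟨k, hk⟩ := hs
  omega

lemma lt_or_gt_of_hasse_adj {x y : α} (h : (hasse α).Adj x y) : x < y ∨ y < x :=
  h.imp CovBy.lt CovBy.lt

lemma ltSign_swap_of_hasse_adj {x y : α} (h : (hasse α).Adj x y) : ltSign y x = -ltSign x y := by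
  rcases lt_or_gt_of_hasse_adj h with h | h
  · rw [ltSign_of_lt h, ltSign_of_gt h]
  · rw [ltSign_of_gt h, ltSign_of_lt h, neg_neg]

lemma not_hasse_adj_of_lt_of_lt_of_lt {x y z w : α} (hxy : x < y) (hyz : y < z) (hzw : z < w) :
    ¬ (hasse α).Adj x w := by
  rintro (h | h)
  · exact h.2 hxy (hyz.trans hzw)
  · exact (h.lt.trans (hxy.trans (hyz.trans hzw))).false

/-- In a Hasse diagram no three consecutive edges of a 4-cycle point the same way. -/
lemma ltSign_add_ltSign_add_ltSign_add_ltSign {a b c d : α} (hab : (hasse α).Adj a b)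
    (hbc : (hasse α).Adj b c) (hcd : (hasse α).Adj c d) (hda : (hasse α).Adj d a) :
    ltSign a b + ltSign b c + ltSign c d + ltSign d a = 0 := by
  rcases lt_or_gt_of_hasse_adj hab with e1 | e1 <;>
    rcases lt_or_gt_of_hasse_adj hbc with e2 | e2 <;>
    rcases lt_or_gt_of_hasse_adj hcd with e3 | e3 <;>
    rcases lt_or_gt_of_hasse_adj hda with e4 | e4 <;>
    simp only [ltSign_of_lt, ltSign_of_gt, *] <;> norm_num <;>
    grind [not_hasse_adj_of_lt_of_lt_of_lt, SimpleGraph.Adj.symm]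

end Sign

section Rung
variable {α : Type*} [PartialOrder α] {n : ℕ} [NeZero n]

def SimpleGraph.CrossLinked {V : Type*} (G : SimpleGraph V) (a b : Fin n → V) : Prop :=
  ∀ j, G.Adj (a j) (b (j + 1)) ∧ G.Adj (b j) (a (j + 1))

lemma SimpleGraph.CrossLinked.symm {V : Type*} {G : SimpleGraph V} {a b : Fin n → V}
    (h : G.CrossLinked a b) : G.CrossLinked b a :=
  fun j => (h j).symm

noncomputable def rungSum (a b : Fin n → α) : ℤ :=
  ∑ j, (ltSign (a j) (b (j + 1)) + ltSign (b j) (a (j + 1)))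

lemma Fin.sum_comp_add_one {M : Type*} [AddCommMonoid M] (F : Fin n → M) :
    ∑ j, F (j + 1) = ∑ j, F j :=
  Equiv.sum_comp (Equiv.addRight 1) F

lemma rungSum_comm (a b : Fin n → α) : rungSum a b = rungSum b a := by
  simp only [rungSum, add_comm]

lemma rungSum_self (a : Fin n → α) : rungSum a a = 2 * ∑ j, ltSign (a j) (a (j + 1)) := by
  simp only [rungSum, ← two_mul, Finset.mul_sum]

lemma rungSum_self_ne_zero (hn : Odd n) (a : Fin n → α) : rungSum a a ≠ 0 := by
  rw [rungSum_self]
  exact mul_ne_zero two_ne_zero (sum_ltSign_ne_zero (by simpa using hn) _ _)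

lemma rungSum_const_eq_zero {a : Fin n → α} {r : α} (h : (hasse α).CrossLinked a fun _ => r) :
    rungSum a (fun _ => r) = 0 := by
  have swap (j : Fin n) : ltSign r (a (j + 1)) = -ltSign (a (j + 1)) r :=
    ltSign_swap_of_hasse_adj (h j).2.symm
  simp only [rungSum, swap, ← sub_eq_add_neg, Finset.sum_sub_distrib,
    Fin.sum_comp_add_one fun j => ltSign (a j) r, sub_self]

/-- Each square `a j, b (j+1), a (j+2), d (j+1)` is balanced; summing over `j` telescopes. -/
lemma rungSum_eq_of_crossLinked {a b d : Fin n → α} (hb : (hasse α).CrossLinked a b)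
    (hd : (hasse α).CrossLinked a d) : rungSum a b = rungSum a d := by
  have square (j : Fin n) : ltSign (a j) (b (j + 1)) + ltSign (b (j + 1)) (a (j + 1 + 1)) =
      ltSign (a j) (d (j + 1)) + ltSign (d (j + 1)) (a (j + 1 + 1)) := by
    have := ltSign_add_ltSign_add_ltSign_add_ltSign (hb j).1 (hb (j + 1)).2
      (hd (j + 1)).2.symm (hd j).1.symm
    rw [ltSign_swap_of_hasse_adj (hd (j + 1)).2, ltSign_swap_of_hasse_adj (hd j).1] at this
    linarith
  have hsum := Finset.sum_congr rfl fun j (_ : j ∈ Finset.univ) => square j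
  simp only [Finset.sum_add_distrib, Fin.sum_comp_add_one fun j => ltSign (b j) (a (j + 1)),
    Fin.sum_comp_add_one fun j => ltSign (d j) (a (j + 1))] at hsum
  simpa only [rungSum, Finset.sum_add_distrib] using hsum

lemma rungSum_chain {w : ℕ → Fin n → α} {N : ℕ} (h₀ : (hasse α).CrossLinked (w 0) (w 0))
    (hw : ∀ i < N, (hasse α).CrossLinked (w i) (w (i + 1))) :
    ∀ i < N, rungSum (w i) (w (i + 1)) = rungSum (w 0) (w 0)
  | 0, hN => (rungSum_eq_of_crossLinked h₀ (hw 0 hN)).symm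
  | i + 1, hi => by
    rw [← rungSum_chain h₀ hw i (by omega), rungSum_comm (w i)]
    exact (rungSum_eq_of_crossLinked ((hw i (by omega)).symm) (hw (i + 1) hi)).symm

end Rung

lemma cycleGraph_adj_iff_val {n : ℕ} (hn : 1 < n) {u v : Fin n} :
    (cycleGraph n).Adj u v ↔ u.val = v.val + 1 ∨ (u.val = 0 ∧ v.val + 1 = n) ∨
      v.val = u.val + 1 ∨ (v.val = 0 ∧ u.val + 1 = n) := by
  have sub_val_eq_one (a b : Fin n) :
      (a - b).val = 1 ↔ a.val = b.val + 1 ∨ (a.val = 0 ∧ b.val + 1 = n) := by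
    rcases le_or_gt b a with h | h
    · rw [Fin.coe_sub_iff_le.2 h]; omega
    · rw [Fin.coe_sub_iff_lt.2 h]; omega
  rw [cycleGraph_adj', sub_val_eq_one, sub_val_eq_one, or_assoc]

lemma cycleGraph_adj_add_one {n : ℕ} [NeZero n] (hn : 1 < n) (j : Fin n) :
    (cycleGraph n).Adj j (j + 1) :=
  cycleGraph_adj'.2 (Or.inr (by rw [add_sub_cancel_left, Fin.val_one', Nat.mod_eq_of_lt hn]))

/-- Walk once around `C_{2s+1}`, then oscillate along the edge `{0, 1}`. -/
def cycleGraph.foldOdd {q s : ℕ} (hs : 1 ≤ s) (hsq : s ≤ q) :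
    cycleGraph (2 * q + 1) →g cycleGraph (2 * s + 1) where
  toFun k := ⟨if k.val ≤ 2 * s then k.val else (k.val + 1) % 2, by split_ifs <;> omega⟩
  map_rel' {u v} h := by
    rw [cycleGraph_adj_iff_val (by omega)] at h ⊢
    have := u.isLt
    have := v.isLt
    dsimp only
    split_ifs <;> omega

def SimpleGraph.Hom.tensorProdLift {V W₁ W₂ : Type*} {G : SimpleGraph V} {H₁ : SimpleGraph W₁}
    {H₂ : SimpleGraph W₂} (f : G →g H₁) (g : G →g H₂) : G →g H₁.tensorProd H₂ where
  toFun x := (f x, g x)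
  map_rel' h := ⟨f.map_adj h, g.map_adj h⟩

namespace SimpleGraph.Myc
variable {V W : Type*} {G : SimpleGraph V}

def map {H : SimpleGraph W} {m : ℕ} (φ : G →g H) : Myc m G →g Myc m H where
  toFun := Option.map (Prod.map id φ)
  map_rel' {x y} h := by
    rcases x with _ | ⟨i, x⟩ <;> rcases y with _ | ⟨k, y⟩
    · exact h
    · exact h
    · exact h
    · exact ⟨φ.map_adj h.1, h.2⟩

/-- Stay on level `0` for the first `p - m` steps, then climb in step with `M_p(G)`. -/
def levelFold {m p : ℕ} (hmp : m ≤ p) : Myc p G →g Myc m G where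
  toFun := Option.map fun x => (⟨min m (x.1 - (p - m)), by omega⟩, x.2)
  map_rel' {x y} h := by
    rcases x with _ | ⟨i, x⟩ <;> rcases y with _ | ⟨k, y⟩ <;>
      simp only [Myc, Option.map_none, Option.map_some] at h ⊢
    · omega
    · omega
    · exact ⟨h.1, by omega⟩

def oddCycleHom {m p q s : ℕ} (hmp : m ≤ p) (hs : 1 ≤ s) (hsq : s ≤ q) :
    Myc p (cycleGraph (2 * q + 1)) →g Myc m (cycleGraph (2 * s + 1)) :=
  (map (cycleGraph.foldOdd hs hsq)).comp (levelFold hmp)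

/-- Vertex `x` on level `i` of `M_P(G)`; every level above `P` is the root. -/
def vertexAt (P i : ℕ) (x : V) : Option (Fin (P + 1) × V) :=
  if h : i ≤ P then some (⟨i, Nat.lt_succ_of_le h⟩, x) else none

lemma adj_vertexAt_zero {P : ℕ} {x y : V} (h : G.Adj x y) :
    (Myc P G).Adj (vertexAt P 0 x) (vertexAt P 0 y) := by
  simp only [vertexAt, dif_pos (Nat.zero_le P)]
  exact ⟨h, Or.inl ⟨rfl, rfl⟩⟩

lemma adj_vertexAt_succ {P i : ℕ} (hi : i ≤ P) {x y : V} (h : G.Adj x y) :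
    (Myc P G).Adj (vertexAt P i x) (vertexAt P (i + 1) y) := by
  rcases hi.lt_or_eq with hi | rfl
  · simp only [vertexAt, dif_pos hi.le, dif_pos (Nat.succ_le_of_lt hi)]
    exact ⟨h, Or.inr (Or.inl rfl)⟩
  · simp only [vertexAt, dif_pos le_rfl, dif_neg (Nat.not_succ_le_self i)]
    exact (rfl : i = i)

end SimpleGraph.Myc

theorem SimpleGraph.Myc.isEmpty_hom_hasse (α : Type*) [PartialOrder α] (P : ℕ) {q : ℕ}
    (hq : 1 ≤ q) : IsEmpty (Myc P (cycleGraph (2 * q + 1)) →g hasse α) := by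
  refine ⟨fun f => ?_⟩
  have hcyc (j : Fin (2 * q + 1)) := cycleGraph_adj_add_one (by omega) j
  let w (i : ℕ) (j : Fin (2 * q + 1)) : α := f (vertexAt P i j)
  have h₀ : (hasse α).CrossLinked (w 0) (w 0) := fun j =>
    ⟨f.map_adj (adj_vertexAt_zero (hcyc j)), f.map_adj (adj_vertexAt_zero (hcyc j))⟩
  have hw : ∀ i < P + 1, (hasse α).CrossLinked (w i) (w (i + 1)) := fun i hi j =>
    ⟨f.map_adj (adj_vertexAt_succ (Nat.lt_succ_iff.1 hi) (hcyc j)),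
      f.map_adj (adj_vertexAt_succ (Nat.lt_succ_iff.1 hi) (hcyc j).symm).symm⟩
  have hroot : w (P + 1) = fun _ => f none := by
    funext j
    simp only [w, vertexAt, dif_neg (Nat.not_succ_le_self P)]
  have hchain := rungSum_chain h₀ hw P P.lt_succ_self
  rw [hroot, rungSum_const_eq_zero (hroot ▸ hw P P.lt_succ_self)] at hchain
  exact rungSum_self_ne_zero (odd_two_mul_add_one q) (w 0) hchain.symm

theorem tensorProd_myc_odd_cycles_not_isCoverGraph_general (m n s t : ℕ)
    (hs : 1 ≤ s) (ht : 1 ≤ t) :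
    ¬ ((SimpleGraph.Myc m (cycleGraph (2 * s + 1))).tensorProd
        (SimpleGraph.Myc n (cycleGraph (2 * t + 1)))).IsCoverGraph := by
  rintro ⟨p, hp⟩
  let _ := p
  let toHasse : ((Myc m (cycleGraph (2 * s + 1))).tensorProd
      (Myc n (cycleGraph (2 * t + 1)))) →g hasse _ := ⟨id, (hp _ _).1⟩
  let f := Myc.oddCycleHom (le_max_left m n) hs (Nat.le_add_right s t)
  let g := Myc.oddCycleHom (le_max_right m n) ht (Nat.le_add_left t s)
  exact (Myc.isEmpty_hom_hasse _ (max m n) (by omega : 1 ≤ s + t)).false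
    (toHasse.comp (f.tensorProdLift g))

/-- For all positive integers `m, n, s, t`, the direct product
`M_m(C_{2s+1}) × M_n(C_{2t+1})` is not a cover graph. -/
theorem tensorProd_myc_odd_cycles_not_isCoverGraph (m n s t : ℕ)
    (hm : 1 ≤ m) (hn : 1 ≤ n) (hs : 1 ≤ s) (ht : 1 ≤ t) :
    ¬ ((SimpleGraph.Myc m (cycleGraph (2 * s + 1))).tensorProd
        (SimpleGraph.Myc n (cycleGraph (2 * t + 1)))).IsCoverGraph :=
  tensorProd_myc_odd_cycles_not_isCoverGraph_general m n s t hs ht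
end

section
/- For graphs G and H and positive integers m, n, the direct product M_m(G) × M_n(H) is a cover graph if and only if G or H is bipartite. -/
open SimpleGraph

/-
If `C` 2-colours `G`, grade `M_m(G)` by `C` on level `0`, by `i + 1` on level `i ≥ 1` and by
`m + 2` at the root, and orient every edge upwards. Edges climb by one or two, and a climb by two
has no midpoint, so no arc is dependent and `M_m(G)` is a cover graph; hence so is its preimage
`M_m(G) × M_n(H)` under the first projection.

Conversely, in the Hasse diagram of a poset the number of ascents of a walk does not change when
one inner vertex is moved: the two steps around it ascend twice, never or once according to how
their endpoints compare. In `M_m(G) × M_n(H)` pair two cone walks `root, level m, …, level 0, …,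
level 0, …, level m, root` of odd length `ℓ`, whose coordinates on the levels bounce along edges
of `G` and `H`. If `G` and `H` contain odd closed walks, the bouncing can be slid around them one
vertex at a time until both coordinates are reversed, which reverses the paired walk. A walk and
its reverse would then have equally many ascents, i.e. `ℓ / 2` each, which is absurd as `ℓ` is odd.
-/

open Relation Finset

namespace SimpleGraph

section Orientation

variable {V P : Type*} [Preorder P] {K : SimpleGraph V} {f : V → P} {a b c : V}

variable (K f) in
def UpAdj (a b : V) : Prop := K.Adj a b ∧ f a < f b

theorem image_lt_of_transGen_upAdj (h : TransGen (K.UpAdj f) a b) : f a < f b := by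
  induction h with
  | single h => exact h.2
  | tail _ h ih => exact ih.trans h.2

theorem image_le_of_reflTransGen_upAdj (h : ReflTransGen (K.UpAdj f) a b) : f a ≤ f b := by
  rcases reflTransGen_iff_eq_or_transGen.mp h with rfl | h
  · exact le_rfl
  · exact (image_lt_of_transGen_upAdj h).le

theorem adj_of_transGen_upAdj_of_covBy (h : TransGen (K.UpAdj f) a b) (hf : f a ⋖ f b) :
    K.Adj a b := by
  obtain ⟨d, had, hdb⟩ := TransGen.head'_iff.mp h
  rcases reflTransGen_iff_eq_or_transGen.mp hdb with rfl | hdb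
  · exact had.1
  · exact (hf.2 had.2 (image_lt_of_transGen_upAdj hdb)).elim

variable (K f) in
abbrev upAdjOrder : PartialOrder V where
  le := ReflTransGen (K.UpAdj f)
  le_refl _ := ReflTransGen.refl
  le_trans _ _ _ := ReflTransGen.trans
  le_antisymm a b hab hba := by
    rcases reflTransGen_iff_eq_or_transGen.mp hab with h | h
    · exact h.symm
    · exact ((image_lt_of_transGen_upAdj h).trans_le
        (image_le_of_reflTransGen_upAdj hba)).false.elim

theorem upAdjOrder_lt_iff :
    letI := K.upAdjOrder f
    a < b ↔ TransGen (K.UpAdj f) a b := by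
  let := K.upAdjOrder f
  refine ⟨fun h => ?_, fun h => ⟨h.to_reflTransGen, fun hba => ?_⟩⟩
  · rcases reflTransGen_iff_eq_or_transGen.mp h.1 with rfl | h'
    · exact (h.2 ReflTransGen.refl).elim
    · exact h'
  · exact ((image_lt_of_transGen_upAdj h).trans_le (image_le_of_reflTransGen_upAdj hba)).false

/-- `hdetour`: the orientation of `K` towards larger values of `f` has no dependent arc. -/
theorem isCoverGraph_of_no_upAdj_detour (hcmp : ∀ a b, K.Adj a b → f a < f b ∨ f b < f a)
    (hdetour : ∀ a b c, K.Adj a b → TransGen (K.UpAdj f) a c → TransGen (K.UpAdj f) c b → False) :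
    K.IsCoverGraph := by
  let := K.upAdjOrder f
  have hcov : ∀ a b : V, a ⋖ b ↔ K.UpAdj f a b := fun a b => by
    refine ⟨fun h => ?_, fun h => ⟨upAdjOrder_lt_iff.mpr (.single h), fun c hac hcb =>
      hdetour a b c h.1 (upAdjOrder_lt_iff.mp hac) (upAdjOrder_lt_iff.mp hcb)⟩⟩
    obtain ⟨d, had, hdb⟩ := TransGen.head'_iff.mp (upAdjOrder_lt_iff.mp h.1)
    rcases reflTransGen_iff_eq_or_transGen.mp hdb with rfl | hdb
    · exact had
    · exact (h.2 (upAdjOrder_lt_iff.mpr (.single had)) (upAdjOrder_lt_iff.mpr hdb)).elim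
  refine ⟨K.upAdjOrder f, fun a b => ?_⟩
  rw [hcov, hcov]
  refine ⟨fun h => (hcmp a b h).imp (⟨h, ·⟩) (⟨h.symm, ·⟩), ?_⟩
  rintro (h | h)
  · exact h.1
  · exact h.1.symm

end Orientation

theorem isCoverGraph_iff {V : Type*} {K : SimpleGraph V} :
    K.IsCoverGraph ↔ ∃ p : PartialOrder V, K = @hasse V p.toPreorder := by
  simp only [IsCoverGraph, SimpleGraph.ext_iff, funext_iff, hasse_adj, eq_iff_iff]

theorem IsCoverGraph.of_hom {V W : Type*} {K : SimpleGraph V} {L : SimpleGraph W} (φ : K →g L)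
    (hL : L.IsCoverGraph) : K.IsCoverGraph := by
  obtain ⟨p, rfl⟩ := isCoverGraph_iff.mp hL
  refine isCoverGraph_of_no_upAdj_detour (f := φ) (fun a b h => ?_) (fun a b c h hac hcb => ?_)
  · exact (φ.map_adj h).imp CovBy.lt CovBy.lt
  · have hlt := image_lt_of_transGen_upAdj hac
    have hgt := image_lt_of_transGen_upAdj hcb
    rcases φ.map_adj h with h | h
    · exact h.2 hlt hgt
    · exact h.lt.not_gt (hlt.trans hgt)

theorem isCoverGraph_of_grading {V : Type*} {K : SimpleGraph V} (F : V → ℕ)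
    (hne : ∀ a b, K.Adj a b → F a ≠ F b) (hle : ∀ a b, K.Adj a b → F b ≤ F a + 2)
    (hmid : ∀ a b c, K.Adj a c → K.Adj c b → F c = F a + 1 → F b = F a + 2 → ¬ K.Adj a b) :
    K.IsCoverGraph := by
  refine isCoverGraph_of_no_upAdj_detour (f := F) (fun a b h => Nat.lt_or_gt_of_ne (hne a b h))
    fun a b c h hac hcb => ?_
  have hlt := image_lt_of_transGen_upAdj hac
  have hgt := image_lt_of_transGen_upAdj hcb
  have := hle a b h
  refine hmid a b c (adj_of_transGen_upAdj_of_covBy hac ?_) (adj_of_transGen_upAdj_of_covBy hcb ?_)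
    (by omega) (by omega) h <;> rw [Nat.covBy_iff_add_one_eq] <;> omega

theorem isCoverGraph_myc_of_colorable {α : Type*} {G : SimpleGraph α} {m : ℕ} (hm : 1 ≤ m)
    (hG : G.Colorable 2) : (Myc m G).IsCoverGraph := by
  obtain ⟨C⟩ := hG
  have hC : ∀ x y, G.Adj x y → (C x : ℕ) + C y = 1 := fun x y h => by
    have := C.valid h; omega
  let F : Option (Fin (m + 1) × α) → ℕ
    | none => m + 2
    | some (i, x) => if i.val = 0 then C x else i + 1
  refine isCoverGraph_of_grading F ?_ ?_ ?_
  · rintro (_ | ⟨i, x⟩) (_ | ⟨k, y⟩) h <;> simp only [Myc, F] at h ⊢ <;> grind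
  · rintro (_ | ⟨i, x⟩) (_ | ⟨k, y⟩) h <;> simp only [Myc, F] at h ⊢ <;> grind
  -- A climb by two goes from `(0, x)` with `C x = 0` to some `(1, y)`, so `C y = 1`; the vertices
  -- of grade one are the `(0, z)` with `C z = 1`, and none of them is adjacent to `(1, y)`.
  · rintro (_ | ⟨i, x⟩) (_ | ⟨k, y⟩) (_ | ⟨j, z⟩) hac hcb hc hb hab <;>
      simp only [Myc, F] at hac hcb hc hb hab <;> grind

section Walks

variable {V α : Type*} {G : SimpleGraph α}

def IsWalkFn (G : SimpleGraph V) (L : ℕ) (γ : ℕ → V) : Prop :=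
  ∀ i < L, G.Adj (γ i) (γ (i + 1))

def ElemMove (G : SimpleGraph V) (L : ℕ) (γ γ' : ℕ → V) : Prop :=
  G.IsWalkFn L γ ∧ G.IsWalkFn L γ' ∧ ∃ j, ∀ i ≤ L, i ≠ j → γ i = γ' i

/-- Change the differing positions one by one, from left to right. -/
theorem reflTransGen_elemMove_of_sparse {L : ℕ} {γ γ' : ℕ → α} (hγ : G.IsWalkFn L γ)
    (hγ' : G.IsWalkFn L γ') (hsparse : ∀ i, γ i ≠ γ' i → γ (i + 1) = γ' (i + 1)) :
    ReflTransGen (G.ElemMove L) γ γ' := by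
  classical
  let mix (k i : ℕ) : α := if i < k then γ' i else γ i
  have hmix : ∀ k, G.IsWalkFn L (mix k) := fun k i hi => by
    simp only [mix]
    split_ifs with h1 h2 h2
    · exact hγ' i hi
    · obtain rfl : k = i + 1 := by omega
      by_cases he : γ i = γ' i
      · exact he ▸ hγ i hi
      · exact hsparse i he ▸ hγ' i hi
    · omega
    · exact hγ i hi
  have hstep : ∀ k, ReflTransGen (G.ElemMove L) γ (mix k) := by
    intro k
    induction k with
    | zero => exact ReflTransGen.single ⟨hγ, hmix 0, 0, fun i _ _ => by simp [mix]⟩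
    | succ k ih =>
      refine ih.tail ⟨hmix k, hmix (k + 1), k, fun i _ hik => ?_⟩
      simp only [mix]
      split_ifs <;> first | rfl | omega
  exact (hstep (L + 1)).tail
    ⟨hmix (L + 1), hγ', 0, fun i hi _ => by simp [mix, Nat.lt_succ_of_le hi]⟩

/-- The walk bouncing along the edge `g k — g (k + 1)`, in phase with the one bouncing along the
next edge of `g`: the two differ only at every other position. -/
def zigzag (g : ℕ → α) (k i : ℕ) : α := if (i + k) % 2 = 1 then g k else g (k + 1)

variable {L : ℕ} {g : ℕ → α}

theorem isWalkFn_zigzag (hg : ∀ i, G.Adj (g i) (g (i + 1))) (k : ℕ) :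
    G.IsWalkFn L (zigzag g k) := fun i _ => by
  unfold zigzag
  split_ifs <;> first | exact hg k | exact (hg k).symm | omega

theorem reflTransGen_elemMove_zigzag (hg : ∀ i, G.Adj (g i) (g (i + 1))) (k : ℕ) :
    ReflTransGen (G.ElemMove L) (zigzag g 0) (zigzag g k) := by
  induction k with
  | zero => exact ReflTransGen.refl
  | succ k ih =>
    refine ih.trans (reflTransGen_elemMove_of_sparse (isWalkFn_zigzag hg k)
      (isWalkFn_zigzag hg (k + 1)) fun i hi => ?_)
    unfold zigzag at hi ⊢
    split_ifs at hi ⊢ <;> first | rfl | omega | exact (hi rfl).elim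

theorem zigzag_reverse_of_periodic {a : ℕ} (hper : Function.Periodic g a) (ha : Odd a)
    (hL : Odd L) {i : ℕ} (hi : i ≤ L) : zigzag g 0 (L - i) = zigzag g a i := by
  obtain ⟨a, rfl⟩ := ha
  obtain ⟨L, rfl⟩ := hL
  have h0 : g (2 * a + 1) = g 0 := by simpa using hper 0
  have h1 : g (2 * a + 1 + 1) = g 1 := by simpa [add_comm] using hper 1
  unfold zigzag
  rw [h0, h1]
  split_ifs <;> first | rfl | omega

theorem exists_odd_periodic_walk (h : ¬ G.Colorable 2) :
    ∃ (a : ℕ) (g : ℕ → α), Odd a ∧ Function.Periodic g a ∧ ∀ i, G.Adj (g i) (g (i + 1)) := by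
  obtain ⟨u, w, hw⟩ : ∃ u, ∃ w : G.Walk u u, ¬ Even w.length := by
    simpa [two_colorable_iff_forall_loop_even] using h
  rw [Nat.not_even_iff_odd] at hw
  have hpos : 0 < w.length := hw.pos
  refine ⟨w.length, fun i => w.getVert (i % w.length), hw, fun i => by simp, fun i => ?_⟩
  have hnext : w.getVert ((i + 1) % w.length) = w.getVert (i % w.length + 1) := by
    have hi : i + 1 = w.length * (i / w.length) + (i % w.length + 1) := by
      have := Nat.div_add_mod i w.length; omega
    rcases Nat.lt_or_eq_of_le (Nat.mod_lt i hpos) with h | h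
    · rw [hi, Nat.mul_add_mod, Nat.mod_eq_of_lt h]
    · rw [hi, ← Nat.succ_eq_add_one, h, ← Nat.mul_succ, Nat.mul_mod_right, Walk.getVert_length,
        Walk.getVert_zero]
  simp only
  rw [hnext]
  exact w.adj_getVert_succ (Nat.mod_lt i hpos)

end Walks

section Ascents

variable {V α : Type*} [PartialOrder V]

open scoped Classical

noncomputable def ascent (a b : V) : ℕ := if a < b then 1 else 0

noncomputable def ascents (ℓ : ℕ) (f : ℕ → V) : ℕ :=
  ∑ i ∈ range ℓ, ascent (f i) (f (i + 1))

theorem ascent_add_ascent {a b c : V} (hab : (hasse V).Adj a b) (hbc : (hasse V).Adj b c) :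
    ascent a b + ascent b c = if a < c then 2 else if c < a then 0 else 1 := by
  simp only [ascent]
  rcases hab with hab | hab <;> rcases hbc with hbc | hbc
  · simp [hab.lt, hbc.lt, hab.lt.trans hbc.lt]
  · have hac : ¬ a < c := fun h => hab.2 h hbc.lt
    have hca : ¬ c < a := fun h => hbc.2 h hab.lt
    simp [hab.lt, hbc.lt.not_gt, hac, hca]
  · have hac : ¬ a < c := fun h => hbc.2 hab.lt h
    have hca : ¬ c < a := fun h => hab.2 hbc.lt h
    simp [hab.lt.not_gt, hbc.lt, hac, hca]
  · simp [hab.lt.not_gt, hbc.lt.not_gt, hbc.lt.trans hab.lt, (hbc.lt.trans hab.lt).not_gt]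

theorem ascents_eq_of_elemMove {ℓ : ℕ} {f f' : ℕ → V} (h : (hasse V).ElemMove ℓ f f')
    (h0 : f 0 = f' 0) (hℓ : f ℓ = f' ℓ) : ascents ℓ f = ascents ℓ f' := by
  obtain ⟨hf, hf', j, hj⟩ := h
  by_cases hj' : j = 0 ∨ ℓ ≤ j
  · have hall : ∀ i ≤ ℓ, f i = f' i := fun i hi => by
      obtain rfl | hij := eq_or_ne i j
      · obtain rfl | rfl : i = 0 ∨ i = ℓ := by omega
        exacts [h0, hℓ]
      · exact hj i hi hij
    refine sum_congr rfl fun i hi => ?_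
    rw [mem_range] at hi
    rw [hall i (by omega), hall (i + 1) (by omega)]
  obtain ⟨k, rfl⟩ : ∃ k, j = k + 1 := Nat.exists_eq_add_one_of_ne_zero (by omega)
  have hpair : {k, k + 1} ⊆ range ℓ := by
    intro i hi
    simp only [mem_insert, mem_singleton] at hi
    rw [mem_range]
    omega
  unfold ascents
  rw [← sum_sdiff hpair, ← sum_sdiff hpair, sum_pair (by omega), sum_pair (by omega),
    ascent_add_ascent (hf k (by omega)) (hf (k + 1) (by omega)),
    ascent_add_ascent (hf' k (by omega)) (hf' (k + 1) (by omega)),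
    hj k (by omega) (by omega), hj (k + 2) (by omega) (by omega)]
  congr 1
  refine sum_congr rfl fun i hi => ?_
  simp only [mem_sdiff, mem_range, mem_insert, mem_singleton] at hi
  rw [hj i (by omega) (by omega), hj (i + 1) (by omega) (by omega)]

theorem ascents_eq_of_reflTransGen {G : SimpleGraph α} {L ℓ : ℕ} {F : (ℕ → α) → ℕ → V}
    (hF : ∀ γ γ', G.ElemMove L γ γ' → (hasse V).ElemMove ℓ (F γ) (F γ'))
    (h0 : ∀ γ γ', F γ 0 = F γ' 0) (hℓ : ∀ γ γ', F γ ℓ = F γ' ℓ) {γ γ' : ℕ → α}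
    (h : ReflTransGen (G.ElemMove L) γ γ') : ascents ℓ (F γ) = ascents ℓ (F γ') := by
  induction h with
  | refl => rfl
  | tail _ hstep ih => exact ih.trans (ascents_eq_of_elemMove (hF _ _ hstep) (h0 _ _) (hℓ _ _))

theorem ascents_add_ascents_of_reverse {ℓ : ℕ} {f f' : ℕ → V} (hf : (hasse V).IsWalkFn ℓ f)
    (hrev : ∀ i ≤ ℓ, f' i = f (ℓ - i)) : ascents ℓ f + ascents ℓ f' = ℓ := by
  unfold ascents
  rw [← sum_range_reflect (fun i => ascent (f' i) (f' (i + 1))), ← sum_add_distrib]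
  refine (sum_congr rfl fun i hi => ?_).trans (card_range ℓ ▸ card_eq_sum_ones _).symm
  rw [mem_range] at hi
  rw [hrev _ (by omega), hrev _ (by omega), show ℓ - (ℓ - 1 - i) = i + 1 by omega,
    show ℓ - (ℓ - 1 - i + 1) = i by omega]
  rcases hf i hi with h | h <;> simp [ascent, h.lt, h.lt.not_gt]

end Ascents

section ConeWalk

variable {α β : Type*} {G : SimpleGraph α} {H : SimpleGraph β} {m L : ℕ}

/-- The closed walk `root, (m, γ 0), (m - 1, γ 1), …, (0, ·), …, (0, ·), …, (m, γ L), root` of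
length `L + 2` in `Myc m G`: position `j + 1` lies on level `m - min j (L - j)`. -/
def coneWalk (m L : ℕ) (γ : ℕ → α) : ℕ → Option (Fin (m + 1) × α)
  | 0 => none
  | j + 1 => if j ≤ L then some (⟨m - min j (L - j), by omega⟩, γ j) else none

theorem coneWalk_last (γ : ℕ → α) : coneWalk m L γ (L + 2) = none := by
  simp [coneWalk]

theorem isWalkFn_coneWalk (hL : 2 * m + 1 ≤ L) {γ : ℕ → α} (hγ : G.IsWalkFn L γ) :
    (Myc m G).IsWalkFn (L + 2) (coneWalk m L γ) := by
  rintro (_ | j) hj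
  · simp [coneWalk, Myc]
  rcases eq_or_lt_of_le (show j ≤ L by omega) with rfl | hj
  · simp [coneWalk, Myc]
  simp only [coneWalk, if_pos hj.le, if_pos (Nat.succ_le_of_lt hj), Myc]
  exact ⟨hγ j hj, by omega⟩

theorem ElemMove.coneWalk (hL : 2 * m + 1 ≤ L) {γ γ' : ℕ → α} (h : G.ElemMove L γ γ') :
    (Myc m G).ElemMove (L + 2) (coneWalk m L γ) (coneWalk m L γ') := by
  obtain ⟨hγ, hγ', j, hj⟩ := h
  refine ⟨isWalkFn_coneWalk hL hγ, isWalkFn_coneWalk hL hγ', j + 1, ?_⟩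
  rintro (_ | i) hi hij
  · rfl
  · simp only [SimpleGraph.coneWalk]
    split_ifs with h
    · rw [hj i h (by omega)]
    · rfl

theorem coneWalk_reverse {γ γ' : ℕ → α} (h : ∀ j ≤ L, γ' (L - j) = γ j) {i : ℕ} (hi : i ≤ L + 2) :
    coneWalk m L γ' (L + 2 - i) = coneWalk m L γ i := by
  rcases i with _ | j
  · exact coneWalk_last γ'
  rcases eq_or_lt_of_le (show j ≤ L + 1 by omega) with rfl | hj
  · simp [coneWalk]
  rw [show L + 2 - (j + 1) = L - j + 1 by omega]
  simp only [SimpleGraph.coneWalk, if_pos (Nat.sub_le L j), if_pos (Nat.lt_succ_iff.mp hj),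
    h j (by omega), Nat.sub_sub_self (Nat.lt_succ_iff.mp hj), min_comm]

end ConeWalk

section TensorProd

variable {α β : Type*} {G : SimpleGraph α} {H : SimpleGraph β} {ℓ : ℕ}

def tensorProdFst : G.tensorProd H →g G := ⟨Prod.fst, And.left⟩

def tensorProdSnd : G.tensorProd H →g H := ⟨Prod.snd, And.right⟩

theorem IsWalkFn.tensorProd {f : ℕ → α} {g : ℕ → β} (hf : G.IsWalkFn ℓ f)
    (hg : H.IsWalkFn ℓ g) : (G.tensorProd H).IsWalkFn ℓ (fun i => (f i, g i)) :=
  fun i hi => ⟨hf i hi, hg i hi⟩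

theorem ElemMove.tensorProd_left {f f' : ℕ → α} {g : ℕ → β} (h : G.ElemMove ℓ f f')
    (hg : H.IsWalkFn ℓ g) :
    (G.tensorProd H).ElemMove ℓ (fun i => (f i, g i)) (fun i => (f' i, g i)) := by
  obtain ⟨hf, hf', j, hj⟩ := h
  exact ⟨hf.tensorProd hg, hf'.tensorProd hg, j, fun i hi hij => Prod.ext (hj i hi hij) rfl⟩

theorem ElemMove.tensorProd_right {f : ℕ → α} {g g' : ℕ → β} (h : H.ElemMove ℓ g g')
    (hf : G.IsWalkFn ℓ f) :
    (G.tensorProd H).ElemMove ℓ (fun i => (f i, g i)) (fun i => (f i, g' i)) := by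
  obtain ⟨hg, hg', j, hj⟩ := h
  exact ⟨hf.tensorProd hg, hf.tensorProd hg', j, fun i hi hij => Prod.ext rfl (hj i hi hij)⟩

theorem not_isCoverGraph_tensorProd_myc {m n : ℕ} (hG : ¬ G.Colorable 2)
    (hH : ¬ H.Colorable 2) : ¬ ((Myc m G).tensorProd (Myc n H)).IsCoverGraph := by
  rw [isCoverGraph_iff]
  rintro ⟨p, hK⟩
  let := p
  obtain ⟨a, g, ha, hga, hg⟩ := exists_odd_periodic_walk hG
  obtain ⟨b, h, hb, hhb, hh⟩ := exists_odd_periodic_walk hH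
  set L := 2 * (m + n) + 1 with hL
  have hLm : 2 * m + 1 ≤ L := by omega
  have hLn : 2 * n + 1 ≤ L := by omega
  let W (γ : ℕ → α) (δ : ℕ → β) (i : ℕ) := (coneWalk m L γ i, coneWalk n L δ i)
  have hW_last : ∀ γ δ, W γ δ (L + 2) = (none, none) := fun γ δ => by
    simp only [W, coneWalk_last]
  have hslide_g : ascents (L + 2) (W (zigzag g 0) (zigzag h 0)) =
      ascents (L + 2) (W (zigzag g a) (zigzag h 0)) :=
    ascents_eq_of_reflTransGen (L := L) (F := (W · (zigzag h 0)))
      (fun _ _ hγ => hK ▸ (hγ.coneWalk hLm).tensorProd_left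
        (isWalkFn_coneWalk hLn (isWalkFn_zigzag hh 0)))
      (fun _ _ => rfl) (fun _ _ => by rw [hW_last, hW_last]) (reflTransGen_elemMove_zigzag hg a)
  have hslide_h : ascents (L + 2) (W (zigzag g a) (zigzag h 0)) =
      ascents (L + 2) (W (zigzag g a) (zigzag h b)) :=
    ascents_eq_of_reflTransGen (L := L) (F := W (zigzag g a))
      (fun _ _ hδ => hK ▸ (hδ.coneWalk hLn).tensorProd_right
        (isWalkFn_coneWalk hLm (isWalkFn_zigzag hg a)))
      (fun _ _ => rfl) (fun _ _ => by rw [hW_last, hW_last]) (reflTransGen_elemMove_zigzag hh b)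
  have hwalk : (hasse _).IsWalkFn (L + 2) (W (zigzag g 0) (zigzag h 0)) :=
    hK ▸ (isWalkFn_coneWalk hLm (isWalkFn_zigzag hg 0)).tensorProd
      (isWalkFn_coneWalk hLn (isWalkFn_zigzag hh 0))
  have hLodd : Odd L := ⟨m + n, hL⟩
  have hrev := ascents_add_ascents_of_reverse hwalk (f' := W (zigzag g a) (zigzag h b))
    fun i hi => by
      simp only [W, coneWalk_reverse (fun j hj => zigzag_reverse_of_periodic hga ha hLodd hj) hi,
        coneWalk_reverse (fun j hj => zigzag_reverse_of_periodic hhb hb hLodd hj) hi]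
  omega

end TensorProd

end SimpleGraph

theorem tensorProd_myc_isCoverGraph_iff_general {α β : Type*}
    (G : SimpleGraph α) (H : SimpleGraph β) (m n : ℕ) (hm : 1 ≤ m) (hn : 1 ≤ n) :
    ((SimpleGraph.Myc m G).tensorProd (SimpleGraph.Myc n H)).IsCoverGraph ↔
      G.Colorable 2 ∨ H.Colorable 2 := by
  refine ⟨fun h => ?_, ?_⟩
  · by_contra! hGH
    exact not_isCoverGraph_tensorProd_myc hGH.1 hGH.2 h
  · rintro (hG | hH)
    · exact (isCoverGraph_myc_of_colorable hm hG).of_hom tensorProdFst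
    · exact (isCoverGraph_myc_of_colorable hn hH).of_hom tensorProdSnd

/-- For graphs `G` and `H` and positive integers `m, n`, the direct product
`M_m(G) × M_n(H)` is a cover graph if and only if `G` or `H` is bipartite. -/
theorem tensorProd_myc_isCoverGraph_iff {α β : Type*} [Fintype α] [Fintype β]
    (G : SimpleGraph α) (H : SimpleGraph β) (m n : ℕ) (hm : 1 ≤ m) (hn : 1 ≤ n) :
    ((SimpleGraph.Myc m G).tensorProd (SimpleGraph.Myc n H)).IsCoverGraph ↔
      G.Colorable 2 ∨ H.Colorable 2 :=
  tensorProd_myc_isCoverGraph_iff_general G H m n hm hn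
end
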